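/- With the setup of the previous statement, for any w = Σ f_i ⊗ g_i with Σ f_i [D₂, g_i] = 0 (a universal one-form killed by the representation via D₂), one has Σ [D₂, f_i]·[D₂, g_i] = 0 and moreover Σ [D₂, f_i] ⊗_A [D₂, g_i] = 0 in the balanced tensor product; i.e., the (2,2)-component of junk tensors vanishes. -/

import Mathlib

/-!
Since `[D₂, a] = ι((ᾱ − 1) a) · η` and `η · ι b = ι(ᾱ b) · η`, a product of two commutators
is `[D₂, a] · [D₂, b] = ι((ᾱ − 1) a · ᾱ((ᾱ − 1) b)) · η²`. For an involution `ᾱ` the coefficient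
`Σ (ᾱ − 1) fᵢ · ᾱ((ᾱ − 1) gᵢ)` equals `ᾱ c + c` with `c = Σ fᵢ · (ᾱ − 1) gᵢ`, and `c = 0` because
`ι(c) · η = Σ fᵢ [D₂, gᵢ] = 0` and one-forms are free on `η`.
-/

open Finset

section

variable {A B : Type*} [CommRing A] [Ring B] {alpha : A →+* A} {iota : A →+* B} {eta : B}

theorem eta_mul_of_involutive (halpha : Function.Involutive alpha)
    (hswap : ∀ a : A, iota a * eta = eta * iota (alpha a)) (a : A) :
    eta * iota a = iota (alpha a) * eta := by
  simpa only [halpha a] using (hswap (alpha a)).symm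

theorem mul_eta_mul_mul_eta (halpha : Function.Involutive alpha)
    (hswap : ∀ a : A, iota a * eta = eta * iota (alpha a)) (x y : A) :
    iota x * eta * (iota y * eta) = iota (x * alpha y) * (eta * eta) := by
  calc iota x * eta * (iota y * eta) = iota x * (eta * iota y) * eta := by noncomm_ring
    _ = iota x * (iota (alpha y) * eta) * eta := by rw [eta_mul_of_involutive halpha hswap]
    _ = iota (x * alpha y) * (eta * eta) := by rw [map_mul]; noncomm_ring

theorem commutator_mul_commutator {D : B} (halpha : Function.Involutive alpha)
    (hswap : ∀ a : A, iota a * eta = eta * iota (alpha a))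
    (hcomm : ∀ a : A, D * iota a - iota a * D = (iota (alpha a) - iota a) * eta) (a b : A) :
    (D * iota a - iota a * D) * (D * iota b - iota b * D)
      = iota ((alpha a - a) * alpha (alpha b - b)) * (eta * eta) := by
  rw [hcomm, hcomm, ← map_sub, ← map_sub, mul_eta_mul_mul_eta halpha hswap]

theorem sum_mul_commutator {D : B}
    (hcomm : ∀ a : A, D * iota a - iota a * D = (iota (alpha a) - iota a) * eta)
    {ι : Type*} (s : Finset ι) (f g : ι → A) :
    ∑ i ∈ s, iota (f i) * (D * iota (g i) - iota (g i) * D)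
      = iota (∑ i ∈ s, f i * (alpha (g i) - g i)) * eta := by
  simp only [hcomm, map_sum, sum_mul, map_mul, map_sub, mul_assoc]

end

theorem sub_mul_map_sub_of_involutive {A : Type*} [CommRing A] {alpha : A →+* A}
    (halpha : Function.Involutive alpha) (a b : A) :
    (alpha a - a) * alpha (alpha b - b) = alpha (a * (alpha b - b)) + a * (alpha b - b) := by
  simp only [map_mul, map_sub, halpha b]
  ring

theorem stmt7_general {A B : Type*} [CommRing A] [Ring B]
    (alpha : A →+* A) (halpha : ∀ a, alpha (alpha a) = a)
    (iota : A →+* B) (eta D₂ : B)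
    (hswap : ∀ a : A, iota a * eta = eta * iota (alpha a))
    (hcomm : ∀ a : A, D₂ * iota a - iota a * D₂ = (iota (alpha a) - iota a) * eta)
    (hfree : ∀ a : A, iota a * eta = 0 → a = 0)
    {ι : Type*} (s : Finset ι) (f g : ι → A)
    (hker : ∑ i ∈ s, iota (f i) * (D₂ * iota (g i) - iota (g i) * D₂) = 0) :
    (∑ i ∈ s, (D₂ * iota (f i) - iota (f i) * D₂) * (D₂ * iota (g i) - iota (g i) * D₂) = 0) ∧
    (∑ i ∈ s, (alpha (f i) - f i) * alpha (alpha (g i) - g i) = 0) := by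
  have hc : ∑ i ∈ s, f i * (alpha (g i) - g i) = 0 :=
    hfree _ (by rw [← sum_mul_commutator hcomm, hker])
  have hcoeff : ∑ i ∈ s, (alpha (f i) - f i) * alpha (alpha (g i) - g i) = 0 := by
    simp only [sub_mul_map_sub_of_involutive halpha, sum_add_distrib, ← map_sum, hc, map_zero,
      add_zero]
  refine ⟨?_, hcoeff⟩
  simp only [commutator_mul_commutator halpha hswap hcomm, ← sum_mul, ← map_sum, hcoeff, map_zero,
    zero_mul]

/-- Same setting as the previous statement, with additionally `[D₂, η_χ] = 0`.
For a universal one-form `w = Σ fᵢ ⊗ gᵢ` killed by the representation via `D₂`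
(`Σ fᵢ [D₂, gᵢ] = 0`), one has `Σ [D₂,fᵢ]·[D₂,gᵢ] = 0`, and moreover the junk
tensor `Σ [D₂,fᵢ] ⊗_A [D₂,gᵢ]` vanishes: since the one-forms form a free
rank-one module on `η_χ` with `η_χ·b = ᾱ(b)·η_χ`, this balanced tensor equals
`(Σ (ᾱ−1)(fᵢ)·ᾱ((ᾱ−1)(gᵢ))) · η_χ ⊗ η_χ`, so its vanishing is expressed by the
vanishing of the coefficient in `A`. -/
theorem stmt7 {A B : Type*} [CommRing A] [Ring B]
    (alpha : A →+* A) (halpha : ∀ a, alpha (alpha a) = a)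
    (iota : A →+* B) (eta D₂ : B)
    (hswap : ∀ a : A, iota a * eta = eta * iota (alpha a))
    (hcomm : ∀ a : A, D₂ * iota a - iota a * D₂ = (iota (alpha a) - iota a) * eta)
    (hfree : ∀ a : A, iota a * eta = 0 → a = 0)
    (hetaD : D₂ * eta = eta * D₂)
    {ι : Type*} (s : Finset ι) (f g : ι → A)
    (hker : ∑ i ∈ s, iota (f i) * (D₂ * iota (g i) - iota (g i) * D₂) = 0) :
    (∑ i ∈ s, (D₂ * iota (f i) - iota (f i) * D₂) * (D₂ * iota (g i) - iota (g i) * D₂) = 0) ∧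
    (∑ i ∈ s, (alpha (f i) - f i) * alpha (alpha (g i) - g i) = 0) :=
  stmt7_general alpha halpha iota eta D₂ hswap hcomm hfree s f g hker
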